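/- Multiple mixing from a spectral gap: Let (X_i)_{i≥0} be a stationary Markov chain on (X,A) with transition probability P and invariant initial distribution ν, and suppose that for some m ∈ [1,∞] there is a complex Banach space B of measurable functions X → ℂ satisfying conditions (A), (B), (C), and (E). Then (X_i)_{i≥0} is multiple mixing with respect to B with d₀ = 0 and s = m/(m−1): for every p ∈ ℕ there exist an integer ℓ and a constant c > 0 such that for all f ∈ B with νf = 0 and ‖f‖_∞ ≤ 1, all integers i₀ ≤ i₁ ≤ … ≤ i_p, and all q ∈ {1,…,p}, |Cov( f(X_{i₀})···f(X_{i_{q−1}}), f(X_{i_q})···f(X_{i_p}) )| ≤ c ‖f‖_{L^s(ν)} ‖f‖_B^ℓ θ^{i_q − i_{q−1}}, where θ ∈ [0,1) is the rate from condition (C). -/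

import Mathlib

open MeasureTheory Filter ProbabilityTheory
open scoped ENNReal NNReal

namespace SECLT

/-! ### The space `ℓ^∞(S)` and Hoffmann–Jørgensen convergence in distribution -/

/-- The sup-distance between two `S`-indexed families of reals (the `ℓ^∞(S)` distance). -/
noncomputable def supDist {S : Type*} (x y : S → ℝ) : ℝ≥0∞ :=
  ⨆ s : S, ENNReal.ofReal |x s - y s|

/-- Continuity of a functional on `ℓ^∞(S)` with respect to the sup-distance. -/
def SupContinuous {S : Type*} (φ : (S → ℝ) → ℝ) : Prop :=
  ∀ x : S → ℝ, ∀ ε : ℝ, 0 < ε → ∃ δ : ℝ, 0 < δ ∧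
    ∀ y : S → ℝ, supDist x y ≤ ENNReal.ofReal δ → |φ x - φ y| ≤ ε

/-- Boundedness of a functional on `ℓ^∞(S)`. -/
def BoundedFunctional {S : Type*} (φ : (S → ℝ) → ℝ) : Prop :=
  ∃ M : ℝ, ∀ x, |φ x| ≤ M

/-- Outer expectation `E* Z = inf { E Y : Y measurable integrable, Y ≥ Z }`. -/
noncomputable def outerExp {Ω : Type*} [MeasurableSpace Ω] (P : Measure Ω) (Z : Ω → ℝ) : ℝ :=
  sInf {r : ℝ | ∃ Y : Ω → ℝ, Measurable Y ∧ Integrable Y P ∧ (∀ ω, Z ω ≤ Y ω) ∧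
    (∫ ω, Y ω ∂P) = r}

/-- Hoffmann–Jørgensen convergence in distribution in `ℓ^∞(S)`: `E*(φ(Y_n)) → E(φ(K))`
for all bounded sup-continuous `φ`. -/
def ConvInDistr {S Ω Ω' : Type*} [MeasurableSpace Ω] [MeasurableSpace Ω'] (P : Measure Ω)
    (Y : ℕ → Ω → S → ℝ) (P' : Measure Ω') (K : Ω' → S → ℝ) : Prop :=
  ∀ φ : (S → ℝ) → ℝ, BoundedFunctional φ → SupContinuous φ →
    Tendsto (fun n => outerExp P fun ω => φ (Y n ω)) atTop
      (nhds (outerExp P' fun ω => φ (K ω)))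

/-- A process indexed by `S` is a centred Gaussian process: every finite linear combination
of its values has a centred Gaussian distribution. -/
def IsCenteredGaussian {S Ω' : Type*} [MeasurableSpace Ω'] (P' : Measure Ω')
    (K : Ω' → S → ℝ) : Prop :=
  ∀ (k : ℕ) (pts : Fin k → S) (a : Fin k → ℝ), ∃ v : ℝ≥0,
    Measure.map (fun ω => ∑ i, a i * K ω (pts i)) P' = gaussianReal 0 v

/-- Total boundedness with respect to the sup-distance. -/
def SupTotallyBounded {S : Type*} (T : Set (S → ℝ)) : Prop :=
  ∀ δ : ℝ, 0 < δ → ∃ A : Finset (S → ℝ), ∀ x ∈ T, ∃ y ∈ A, supDist x y ≤ ENNReal.ofReal δ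

/-- Closedness with respect to the sup-distance. -/
def SupClosed' {S : Type*} (T : Set (S → ℝ)) : Prop :=
  ∀ x : S → ℝ, (∀ ε : ℝ, 0 < ε → ∃ y ∈ T, supDist x y ≤ ENNReal.ofReal ε) → x ∈ T

/-- Tightness of the law of an `ℓ^∞(S)`-valued random element: for every `ε > 0` there is a
compact (= totally bounded and closed) set carrying all but `ε` of the (outer) mass. -/
def TightProcess {S Ω' : Type*} [MeasurableSpace Ω'] (P' : Measure Ω')
    (K : Ω' → S → ℝ) : Prop :=
  ∀ ε : ℝ, 0 < ε → ∃ T : Set (S → ℝ), SupTotallyBounded T ∧ SupClosed' T ∧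
    P' {ω | K ω ∉ T} ≤ ENNReal.ofReal ε

/-- Weak measurability of an `ℓ^∞(S)`-valued random element: compositions with bounded
sup-continuous functionals are measurable. -/
def WeaklyMeasurable {S Ω' : Type*} [MeasurableSpace Ω'] (K : Ω' → S → ℝ) : Prop :=
  ∀ φ : (S → ℝ) → ℝ, BoundedFunctional φ → SupContinuous φ →
    Measurable fun ω => φ (K ω)

/-- Separability of an `ℓ^∞(S)`-valued random element: almost surely the values lie in the
sup-closure of a countable set. -/
def SeparableValued {S Ω' : Type*} [MeasurableSpace Ω'] (P' : Measure Ω')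
    (K : Ω' → S → ℝ) : Prop :=
  ∃ T : Set (S → ℝ), T.Countable ∧
    ∀ᵐ ω ∂P', ∀ ε : ℝ, 0 < ε → ∃ y ∈ T, supDist (K ω) y ≤ ENNReal.ofReal ε

/-! ### Processes, covariance, stationarity, the sequential empirical process -/

/-- Covariance of two real random variables. -/
noncomputable def cov {Ω : Type*} [MeasurableSpace Ω] (P : Measure Ω) (Y Z : Ω → ℝ) : ℝ :=
  (∫ ω, Y ω * Z ω ∂P) - (∫ ω, Y ω ∂P) * (∫ ω, Z ω ∂P)

/-- A uniformly (sup-norm) bounded class of functions. -/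
def UnifBounded {𝓧 : Type*} (F : Set (𝓧 → ℝ)) : Prop :=
  ∃ M : ℝ, ∀ f ∈ F, ∀ x, |f x| ≤ M

/-- Stationarity of a process: the joint law is invariant under the time shift. -/
def IsStationary {Ω 𝓧 : Type*} [MeasurableSpace Ω] [MeasurableSpace 𝓧] (P : Measure Ω)
    (X : ℕ → Ω → 𝓧) : Prop :=
  ∀ k : ℕ, Measure.map (fun ω (i : ℕ) => X (i + k) ω) P
    = Measure.map (fun ω (i : ℕ) => X i ω) P

/-- The normalized sequential partial sum
`n^{-1/2} ∑_{i=1}^{⌊nt⌋} (f(X_i) - μ f)`. -/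
noncomputable def seqSum {Ω 𝓧 : Type*} [MeasurableSpace 𝓧] (X : ℕ → Ω → 𝓧)
    (μ : Measure 𝓧) (f : 𝓧 → ℝ) (t : ℝ) (n : ℕ) (ω : Ω) : ℝ :=
  (Real.sqrt (n : ℝ))⁻¹ * ∑ i ∈ Finset.Icc 1 ⌊(n : ℝ) * t⌋₊, (f (X i ω) - ∫ x, f x ∂μ)

/-- The sequential empirical process `U_n`, as a random element of `ℓ^∞(F × [0,1])`. -/
noncomputable def seqEmpProc {Ω 𝓧 : Type*} [MeasurableSpace 𝓧] (X : ℕ → Ω → 𝓧)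
    (μ : Measure 𝓧) (F : Set (𝓧 → ℝ)) (n : ℕ) (ω : Ω) :
    (↥F × ↥(Set.Icc (0:ℝ) 1)) → ℝ :=
  fun p => seqSum X μ (p.1 : 𝓧 → ℝ) (p.2 : ℝ) n ω

/-- The limiting (Kiefer) covariance structure:
`Cov(K(f₁,t₁),K(f₂,t₂)) = min(t₁,t₂) (∑_{k≥0} Cov(f₁(X₀),f₂(X_k)) + ∑_{k≥1} Cov(f₁(X_k),f₂(X₀)))`. -/
def HasKieferCovariance {Ω Ω' 𝓧 : Type*} [MeasurableSpace Ω] [MeasurableSpace Ω']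
    [MeasurableSpace 𝓧] (P : Measure Ω) (X : ℕ → Ω → 𝓧) (F : Set (𝓧 → ℝ))
    (P' : Measure Ω') (K : Ω' → (↥F × ↥(Set.Icc (0:ℝ) 1)) → ℝ) : Prop :=
  ∀ (f₁ f₂ : ↥F) (t₁ t₂ : ↥(Set.Icc (0:ℝ) 1)),
    cov P' (fun ω => K ω (f₁, t₁)) (fun ω => K ω (f₂, t₂))
      = min (t₁ : ℝ) (t₂ : ℝ) *
        ((∑' k : ℕ, cov P (fun ω => (f₁ : 𝓧 → ℝ) (X 0 ω)) fun ω => (f₂ : 𝓧 → ℝ) (X k ω))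
          + ∑' k : ℕ, cov P (fun ω => (f₁ : 𝓧 → ℝ) (X (k + 1) ω)) fun ω => (f₂ : 𝓧 → ℝ) (X 0 ω))

/-! ### Bracketing numbers and entropy conditions -/

/-- `F` is covered by `n` brackets `[l_i, u_i]` with `l_i, u_i ∈ G ⊆ B'`, of `L^s(ν)`-size at
most `ε` and of `B'`-size at most `A`.  Here `toFun` realizes elements of `B'` as functions
and `nB` measures their size. -/
def CoversWithBrackets {𝓧 B' : Type*} [MeasurableSpace 𝓧] (ν : Measure 𝓧) (s : ℝ≥0∞)
    (nB : B' → ℝ≥0∞) (toFun : B' → 𝓧 → ℝ) (F : Set (𝓧 → ℝ)) (G : Set B')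
    (ε A : ℝ) (n : ℕ) : Prop :=
  ∃ l u : Fin n → B',
    (∀ i, l i ∈ G ∧ u i ∈ G ∧
      eLpNorm (fun x => toFun (u i) x - toFun (l i) x) s ν ≤ ENNReal.ofReal ε ∧
      nB (u i) ≤ ENNReal.ofReal A ∧ nB (l i) ≤ ENNReal.ofReal A) ∧
    ∀ f ∈ F, ∃ i, ∀ x, toFun (l i) x ≤ f x ∧ f x ≤ toFun (u i) x

/-- The bracketing number `N(ε, A, F, G, L^s(ν))` (as an extended natural). -/
noncomputable def bracketingNumber {𝓧 B' : Type*} [MeasurableSpace 𝓧] (ν : Measure 𝓧)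
    (s : ℝ≥0∞) (nB : B' → ℝ≥0∞) (toFun : B' → 𝓧 → ℝ) (F : Set (𝓧 → ℝ)) (G : Set B')
    (ε A : ℝ) : ℝ≥0∞ :=
  sInf {N : ℝ≥0∞ | ∃ n : ℕ, N = (n : ℝ≥0∞) ∧ CoversWithBrackets ν s nB toFun F G ε A n}

/-- The exponential entropy condition with exponent `γ`:
`∫₀¹ ε^r sup_{ε≤δ≤1} N²(δ, exp(C δ^{-1/γ}), F, G, L^s(ν)) dε < ∞`
for some `C > 0` and some `r > -1`. -/
def ExpEntropy {𝓧 B' : Type*} [MeasurableSpace 𝓧] (ν : Measure 𝓧) (s : ℝ≥0∞)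
    (nB : B' → ℝ≥0∞) (toFun : B' → 𝓧 → ℝ) (F : Set (𝓧 → ℝ)) (G : Set B') (γ : ℝ) : Prop :=
  ∃ C : ℝ, 0 < C ∧ ∃ r : ℝ, -1 < r ∧
    (∫⁻ ε in Set.Ioo (0:ℝ) 1,
      ENNReal.ofReal (ε ^ r) *
        (⨆ δ ∈ Set.Icc ε 1,
          (bracketingNumber ν s nB toFun F G δ (Real.exp (C * δ ^ (-γ⁻¹)))) ^ 2)) < ⊤

/-- The entropy condition with bracket-size function `Ψ`:
`∫₀¹ ε^r sup_{ε≤δ≤1} N²(δ, Ψ(δ⁻¹), F, G, L^s(ν)) dε < ∞`. -/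
def PsiEntropy {𝓧 B' : Type*} [MeasurableSpace 𝓧] (ν : Measure 𝓧) (s : ℝ≥0∞)
    (nB : B' → ℝ≥0∞) (toFun : B' → 𝓧 → ℝ) (F : Set (𝓧 → ℝ)) (G : Set B')
    (Ψ : ℝ → ℝ) (r : ℝ) : Prop :=
  (∫⁻ ε in Set.Ioo (0:ℝ) 1,
    ENNReal.ofReal (ε ^ r) *
      (⨆ δ ∈ Set.Icc ε 1, (bracketingNumber ν s nB toFun F G δ (Ψ δ⁻¹)) ^ 2)) < ⊤

/-! ### Finite dimensional sequential CLT and moment bounds -/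

/-- `V_n` converges in distribution (via Cramér–Wold) to the centered multivariate normal law
with covariance matrix `Sig`. -/
def CramerWoldLimit {Ω : Type*} [MeasurableSpace Ω] {k : ℕ} (P : Measure Ω)
    (V : ℕ → Ω → Fin k → ℝ) (Sig : Matrix (Fin k) (Fin k) ℝ) : Prop :=
  ∀ a : Fin k → ℝ, ∃ v : ℝ≥0, (v : ℝ) = ∑ i, ∑ j, a i * Sig i j * a j ∧
    ∀ φ : BoundedContinuousFunction ℝ ℝ,
      Tendsto (fun n => ∫ ω, φ (∑ i, a i * V n ω i) ∂P) atTop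
        (nhds (∫ y, φ y ∂(gaussianReal 0 v)))

/-- Assumption 1: the finite dimensional sequential CLT for `G`-observables. -/
def FidiSeqCLT {Ω 𝓧 C' : Type*} [MeasurableSpace Ω] [MeasurableSpace 𝓧] (P : Measure Ω)
    (X : ℕ → Ω → 𝓧) (μ : Measure 𝓧) (toFun : C' → 𝓧 → ℝ) (G : Set C') : Prop :=
  ∀ (k : ℕ) (g : Fin k → C'), (∀ i, g i ∈ G) → ∀ t : Fin k → ℝ,
    (∀ i, t i ∈ Set.Icc (0:ℝ) 1) →
    ∃ Sig : Matrix (Fin k) (Fin k) ℝ,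
      CramerWoldLimit P (fun n ω i => seqSum X μ (toFun (g i)) (t i) n ω) Sig

/-- Assumption 1 with the Kiefer covariance matrix
`Σ_{ij} = min(t_i,t_j) (∑_{k≥0} Cov(f_i(X₀),f_j(X_k)) + ∑_{k≥1} Cov(f_j(X₀),f_i(X_k)))`. -/
def FidiSeqCLTKiefer {Ω 𝓧 C' : Type*} [MeasurableSpace Ω] [MeasurableSpace 𝓧] (P : Measure Ω)
    (X : ℕ → Ω → 𝓧) (μ : Measure 𝓧) (toFun : C' → 𝓧 → ℝ) (G : Set C') : Prop :=
  ∀ (k : ℕ) (g : Fin k → C'), (∀ i, g i ∈ G) → ∀ t : Fin k → ℝ,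
    (∀ i, t i ∈ Set.Icc (0:ℝ) 1) →
    CramerWoldLimit P (fun n ω i => seqSum X μ (toFun (g i)) (t i) n ω)
      (fun i j => min (t i) (t j) *
        ((∑' k' : ℕ, cov P (fun ω => toFun (g i) (X 0 ω)) fun ω => toFun (g j) (X k' ω))
          + ∑' k' : ℕ, cov P (fun ω => toFun (g j) (X 0 ω)) fun ω => toFun (g i) (X (k' + 1) ω)))

/-- Assumption 2: the `2p`-th moment bound
`E[(∑_{i=1}^n (f(X_i)-μf))^{2p}] ≤ ∑_{i=1}^p n^i ‖f‖_s^i Φ_i(‖f‖_C)` for all `f ∈ G'`. -/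
def MomentBound2p {Ω 𝓧 C' : Type*} [MeasurableSpace Ω] [MeasurableSpace 𝓧] (P : Measure Ω)
    (X : ℕ → Ω → 𝓧) (μ : Measure 𝓧) (toFun : C' → 𝓧 → ℝ) (nC : C' → ℝ) (G' : Set C')
    (p : ℕ) (s : ℝ≥0∞) (Φ : ℕ → ℝ → ℝ) : Prop :=
  ∀ f ∈ G', ∀ n : ℕ,
    (∫ ω, (∑ i ∈ Finset.Icc 1 n, (toFun f (X i ω) - ∫ x, toFun f x ∂μ)) ^ (2 * p) ∂P)
      ≤ ∑ i ∈ Finset.Icc 1 p,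
          (n : ℝ) ^ i * (eLpNorm (toFun f) s μ).toReal ^ i * Φ i (nC f)

/-- The multiple mixing property with respect to the space realized by `toFun`,
with mixing rate `θ` and polynomial degree bound `d₀`. -/
def MultipleMixing {Ω 𝓧 C' : Type*} [MeasurableSpace Ω] [MeasurableSpace 𝓧] (P : Measure Ω)
    (X : ℕ → Ω → 𝓧) (μ : Measure 𝓧) (toFun : C' → 𝓧 → ℝ) (nC : C' → ℝ) (s : ℝ≥0∞)
    (θ : ℝ) (d₀ : ℕ) : Prop :=
  ∀ p : ℕ, 0 < p → ∃ (ℓ : ℕ) (Q : MvPolynomial (Fin p) ℝ), Q.totalDegree ≤ d₀ ∧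
    ∀ f : C', (∫ x, toFun f x ∂μ) = 0 → (∀ x, |toFun f x| ≤ 1) →
    ∀ i : ℕ → ℕ, Monotone i → ∀ q : ℕ, 1 ≤ q → q ≤ p →
      |cov P (fun ω => ∏ j ∈ Finset.range q, toFun f (X (i j) ω))
          (fun ω => ∏ j ∈ Finset.Icc q p, toFun f (X (i j) ω))|
        ≤ (eLpNorm (toFun f) s μ).toReal * nC f ^ ℓ *
            MvPolynomial.eval (fun j : Fin p => ((i ((j : ℕ) + 1) : ℝ) - (i (j : ℕ) : ℝ))) Q *
            θ ^ (i q - i (q - 1))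

/-! ### Time discretization -/

/-- `τ_q t`, the largest point of the form `(j-1) 2^{-q}`, `j = 1, …, 2^q`, below `t`. -/
noncomputable def tauq (q : ℕ) (t : ℝ) : ℝ :=
  (min ⌊(2:ℝ) ^ q * t⌋₊ (2 ^ q - 1) : ℕ) * ((2:ℝ) ^ q)⁻¹

/-- The dyadic partition interval `T_{q,j}` of `[0,1]` (for `j = 0, …, 2^q - 1`). -/
noncomputable def Tsetq (q j : ℕ) : Set ℝ :=
  if j + 1 = 2 ^ q then Set.Icc (1 - ((2:ℝ) ^ q)⁻¹) 1
  else Set.Ico ((j : ℝ) * ((2:ℝ) ^ q)⁻¹) (((j : ℝ) + 1) * ((2:ℝ) ^ q)⁻¹)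

/-! ### Markov chains and Banach spaces of functions -/

/-- The Markov property of `(X_i)` with transition kernel `κ`:
`E[h(X_0,…,X_n) g(X_{n+1})] = E[h(X_0,…,X_n) ∫ g dκ(X_n, ·)]` for bounded measurable `g, h`. -/
def IsMarkovChain {Ω 𝓧 : Type*} [MeasurableSpace Ω] [MeasurableSpace 𝓧] (P : Measure Ω)
    (X : ℕ → Ω → 𝓧) (κ : ProbabilityTheory.Kernel 𝓧 𝓧) : Prop :=
  ∀ n : ℕ, ∀ g : 𝓧 → ℝ, Measurable g → (∃ M, ∀ x, |g x| ≤ M) →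
  ∀ h : (Fin (n + 1) → 𝓧) → ℝ, Measurable h → (∃ M, ∀ v, |h v| ≤ M) →
    (∫ ω, h (fun i => X (i : ℕ) ω) * g (X (n + 1) ω) ∂P)
      = ∫ ω, h (fun i => X (i : ℕ) ω) * ∫ y, g y ∂(κ (X n ω)) ∂P

/-- Condition (A): `1 ∈ B`; `|f|, conj f ∈ B` for `f ∈ B`; elements of `B` are measurable;
Dirac measures are continuous functionals on `B`. -/
def CondA {𝓧 B : Type*} [MeasurableSpace 𝓧] [NormedAddCommGroup B] [NormedSpace ℂ B]
    (ι : B →ₗ[ℂ] 𝓧 → ℂ) : Prop :=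
  (∀ b : B, Measurable (ι b)) ∧
  (∃ one : B, ι one = fun _ => 1) ∧
  (∀ b : B, ∃ babs : B, ι babs = fun x => ((‖ι b x‖ : ℝ) : ℂ)) ∧
  (∀ b : B, ∃ bconj : B, ι bconj = fun x => starRingEnd ℂ (ι b x)) ∧
  (∀ x : 𝓧, ∃ c : ℝ, 0 ≤ c ∧ ∀ b : B, ‖ι b x‖ ≤ c * ‖b‖)

/-- Condition (B): `B` is continuously included in `L^m(ν)`. -/
def CondB {𝓧 B : Type*} [MeasurableSpace 𝓧] [NormedAddCommGroup B] [NormedSpace ℂ B]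
    (ι : B →ₗ[ℂ] 𝓧 → ℂ) (ν : Measure 𝓧) (m : ℝ≥0∞) : Prop :=
  ∃ K : ℝ, 0 < K ∧ ∀ b : B, eLpNorm (ι b) m ν ≤ ENNReal.ofReal (K * ‖b‖)

/-- Condition (C): geometric ergodicity of the operator `PB` on `B`,
`‖P^n f − (νf) 1‖_B ≤ κc ‖f‖_B θ^n`. -/
def CondC {𝓧 B : Type*} [MeasurableSpace 𝓧] [NormedAddCommGroup B] [NormedSpace ℂ B]
    (ι : B →ₗ[ℂ] 𝓧 → ℂ) (ν : Measure 𝓧) (one : B) (PB : B →L[ℂ] B)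
    (κc θ : ℝ) : Prop :=
  ∀ b : B, ∀ n : ℕ, ‖(PB ^ n) b - (∫ x, ι b x ∂ν) • one‖ ≤ κc * ‖b‖ * θ ^ n

/-- Condition (E): products of functions of `B` bounded by one belong to `B`, with
`‖fg‖_B ≤ C max(‖f‖_B, ‖g‖_B)^ℓ`. -/
def CondE {𝓧 B : Type*} [MeasurableSpace 𝓧] [NormedAddCommGroup B] [NormedSpace ℂ B]
    (ι : B →ₗ[ℂ] 𝓧 → ℂ) : Prop :=
  ∃ C : ℝ, 0 < C ∧ ∃ ℓ : ℕ, ∀ f g : B,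
    (∀ x, ‖ι f x‖ ≤ 1) → (∀ x, ‖ι g x‖ ≤ 1) →
    ∃ h : B, (∀ x, ι h x = ι f x * ι g x) ∧ ‖h‖ ≤ C * max ‖f‖ ‖g‖ ^ ℓ

/-- Compatibility of the abstract operator `PB` with the Markov kernel `κ`:
`(PB f)(x) = ∫ f dκ(x,·)`. -/
def MarkovOpCompat {𝓧 B : Type*} [MeasurableSpace 𝓧] [NormedAddCommGroup B]
    [NormedSpace ℂ B] (ι : B →ₗ[ℂ] 𝓧 → ℂ) (κ : ProbabilityTheory.Kernel 𝓧 𝓧)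
    (PB : B →L[ℂ] B) : Prop :=
  ∀ b : B, ∀ x, ι (PB b) x = ∫ y, ι b y ∂(κ x)

/-- Condition (D) for a real function `f`: the perturbed operators `P_{f,t} φ = P(e^{itf} φ)`
act on `B` for `t` near `0`, and `t ↦ P_{f,t}` is twice continuously differentiable with
`k`-th derivative at `0` given by `φ ↦ P((if)^k φ)`. -/
def CondD {𝓧 B : Type*} [MeasurableSpace 𝓧] [NormedAddCommGroup B] [NormedSpace ℂ B]
    (ι : B →ₗ[ℂ] 𝓧 → ℂ) (κ : ProbabilityTheory.Kernel 𝓧 𝓧) (f : 𝓧 → ℝ) : Prop :=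
  ∃ ε : ℝ, 0 < ε ∧ ∃ Q : ℝ → B →L[ℂ] B,
    (∀ t ∈ Set.Ioo (-ε) ε, ∀ φ : B, ∀ x,
      ι (Q t φ) x = ∫ y, Complex.exp (Complex.I * (t : ℂ) * (f y : ℂ)) * ι φ y ∂(κ x)) ∧
    ContDiffOn ℝ 2 Q (Set.Ioo (-ε) ε) ∧
    (∀ φ : B, ∀ x, ι (derivWithin Q (Set.Ioo (-ε) ε) 0 φ) x
        = ∫ y, (Complex.I * (f y : ℂ)) * ι φ y ∂(κ x)) ∧
    (∀ φ : B, ∀ x, ι (derivWithin (derivWithin Q (Set.Ioo (-ε) ε)) (Set.Ioo (-ε) ε) 0 φ) x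
        = ∫ y, (Complex.I * (f y : ℂ)) ^ 2 * ι φ y ∂(κ x))

/-- An element of `B` is real-valued. -/
def RealValued {𝓧 B : Type*} [NormedAddCommGroup B] [NormedSpace ℂ B]
    (ι : B →ₗ[ℂ] 𝓧 → ℂ) (b : B) : Prop :=
  ∀ x, (ι b x).im = 0

end SECLT

open SECLT

/-!
Write `P` for the Markov operator (`markovOp κ`) and `N = i_q - i_{q-1}`. By the Markov
property, the conditional expectation of the second block `f(X_{i_q}) ⋯ f(X_{i_p})` given the
past up to time `i_q` is `φ(X_{i_q})`, where `φ = f · P^{g₁}(f · P^{g₂}(⋯ (f · P^{g_{p-q}} f)))`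
and `gⱼ = i_{q+j} - i_{q+j-1}`. Conditioning down to time `i_{q-1}` turns the covariance into
`E[f(X_{i₀}) ⋯ f(X_{i_{q-1}}) · r(X_{i_{q-1}})]` with `r = P^N φ - νφ`. Condition (E) puts `φ`
in `B`, the spectral gap (C) gives `‖r‖_B ≤ κ ‖φ‖_B θ^N`, and Hölder's inequality together with
the embedding (B) bounds the expectation by `K ‖f‖_s ‖r‖_B`.

If the product bound in (E) has degree `ℓ' ≥ 2`, the resulting power of `‖f‖_B` depends on `q`.
To remove this dependence, the first block is collapsed onto `r` in the same way. Rescaling the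
factors turns (E) into the homogeneous bound `‖f g‖_B ≤ C ‖f‖_B^{ℓ'-1} ‖g‖_B`, and the two
blocks together then contribute the fixed power `(ℓ' - 1)(p - 1) + 1`.
-/

namespace SECLT

lemma integral_norm_mul_norm_le {α : Type*} [MeasurableSpace α] {μ : Measure α}
    {m s : ℝ≥0∞} [ENNReal.HolderTriple s m 1] {φ γ : α → ℂ}
    (hφ : MemLp φ s μ) (hγ : MemLp γ m μ) :
    ∫ x, ‖φ x‖ * ‖γ x‖ ∂μ ≤ (eLpNorm φ s μ).toReal * (eLpNorm γ m μ).toReal := by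
  have hprod : eLpNorm (fun x => φ x * γ x) 1 μ ≤ eLpNorm φ s μ * eLpNorm γ m μ := by
    simpa using eLpNorm_le_eLpNorm_mul_eLpNorm_of_nnnorm (r := 1) hφ.1 hγ.1 (· * ·) 1
      (ae_of_all _ fun x => by simp)
  calc ∫ x, ‖φ x‖ * ‖γ x‖ ∂μ = (eLpNorm (fun x => φ x * γ x) 1 μ).toReal := by
        rw [eLpNorm_one_eq_lintegral_enorm, ← integral_norm_eq_lintegral_enorm
          (f := fun x => φ x * γ x) (hφ.1.mul hγ.1)]
        simp_rw [norm_mul]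
    _ ≤ (eLpNorm φ s μ * eLpNorm γ m μ).toReal :=
      ENNReal.toReal_mono (ENNReal.mul_ne_top hφ.eLpNorm_ne_top hγ.eLpNorm_ne_top) hprod
    _ = (eLpNorm φ s μ).toReal * (eLpNorm γ m μ).toReal := ENNReal.toReal_mul

lemma abs_integral_le_of_abs_le {α : Type*} [MeasurableSpace α] {μ : Measure α}
    [IsProbabilityMeasure μ] {u : α → ℝ} {M : ℝ} (hu : ∀ x, |u x| ≤ M) : |∫ x, u x ∂μ| ≤ M := by
  simpa using norm_integral_le_of_norm_le_const (μ := μ)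
    (ae_of_all _ fun x => (Real.norm_eq_abs _).trans_le (hu x))

lemma norm_prod_range_succ_le {a : ℕ → ℂ} (ha : ∀ j, ‖a j‖ ≤ 1) (n : ℕ) :
    ‖∏ j ∈ Finset.range (n + 1), a j‖ ≤ ‖a n‖ := by
  rw [Finset.prod_range_succ, norm_mul, norm_prod]
  exact mul_le_of_le_one_left (norm_nonneg _)
    (Finset.prod_le_one (fun _ _ => norm_nonneg _) fun j _ => ha j)

section MarkovOperator

variable {𝓧 : Type*} [MeasurableSpace 𝓧] {κ : Kernel 𝓧 𝓧} {g : 𝓧 → ℂ}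

noncomputable def markovOp (κ : Kernel 𝓧 𝓧) (g : 𝓧 → ℂ) : 𝓧 → ℂ :=
  fun x => ∫ y, g y ∂(κ x)

lemma measurable_markovOp (hg : Measurable g) : Measurable (markovOp κ g) :=
  hg.stronglyMeasurable.integral_kernel.measurable

lemma norm_markovOp_le [IsMarkovKernel κ] {M : ℝ} (hg : ∀ x, ‖g x‖ ≤ M) (x : 𝓧) :
    ‖markovOp κ g x‖ ≤ M := by
  simpa [markovOp] using norm_integral_le_of_norm_le_const (μ := κ x) (ae_of_all _ hg)

lemma measurable_iterate_markovOp (hg : Measurable g) (k : ℕ) :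
    Measurable ((markovOp κ)^[k] g) :=
  Function.Iterate.rec (fun g : 𝓧 → ℂ => Measurable g) hg (fun _ => measurable_markovOp) k

lemma norm_iterate_markovOp_le [IsMarkovKernel κ] {M : ℝ} (hg : ∀ x, ‖g x‖ ≤ M) (k : ℕ)
    (x : 𝓧) : ‖(markovOp κ)^[k] g x‖ ≤ M :=
  Function.Iterate.rec (fun g : 𝓧 → ℂ => ∀ x, ‖g x‖ ≤ M) hg (fun _ => norm_markovOp_le) k x

/-- `tailOp κ f τ k c = P^{τ₁-τ₀} (f · P^{τ₂-τ₁} (f ⋯ P^{τₖ-τₖ₋₁} (f · c)))`, so that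
`f · tailOp κ f τ k c` at `X τ₀` is the conditional expectation of `f(X τ₀) ⋯ f(X τₖ) c(X τₖ)`
given the past up to time `τ₀`. -/
noncomputable def tailOp (κ : Kernel 𝓧 𝓧) (f : 𝓧 → ℂ) : (ℕ → ℕ) → ℕ → (𝓧 → ℂ) → 𝓧 → ℂ
  | _, 0, c => c
  | τ, k + 1, c => (markovOp κ)^[τ 1 - τ 0] (f * tailOp κ f (fun j => τ (j + 1)) k c)

variable {f c : 𝓧 → ℂ}

lemma measurable_tailOp (hf : Measurable f) (hc : Measurable c) (k : ℕ) (τ : ℕ → ℕ) :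
    Measurable (tailOp κ f τ k c) := by
  induction k generalizing τ with
  | zero => exact hc
  | succ k ih => exact measurable_iterate_markovOp (hf.mul (ih _)) _

lemma norm_tailOp_le [IsMarkovKernel κ] (hf : ∀ x, ‖f x‖ ≤ 1) {M : ℝ} (hc : ∀ x, ‖c x‖ ≤ M)
    (k : ℕ) (τ : ℕ → ℕ) (x : 𝓧) : ‖tailOp κ f τ k c x‖ ≤ M := by
  induction k generalizing τ x with
  | zero => exact hc x
  | succ k ih =>
    refine norm_iterate_markovOp_le (fun y => ?_) _ x
    rw [Pi.mul_apply, norm_mul]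
    exact (mul_le_mul_of_nonneg_right (hf y) (norm_nonneg _)).trans (by simpa using ih _ y)

lemma norm_mul_tailOp_one_le [IsMarkovKernel κ] (hf : ∀ x, ‖f x‖ ≤ 1) (k : ℕ) (τ : ℕ → ℕ)
    (x : 𝓧) : ‖(f * tailOp κ f τ k 1) x‖ ≤ 1 := by
  rw [Pi.mul_apply, norm_mul]
  exact mul_le_one₀ (hf x) (norm_nonneg _) (norm_tailOp_le hf (fun _ => norm_one.le) k τ x)

end MarkovOperator

section PastFunctional

variable {Ω 𝓧 : Type*} [MeasurableSpace 𝓧]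

def IsBoundedPastFunctional (X : ℕ → Ω → 𝓧) (n : ℕ) (Y : Ω → ℂ) : Prop :=
  ∃ ψ : (Fin (n + 1) → 𝓧) → ℂ, Measurable ψ ∧ (∃ M, ∀ v, ‖ψ v‖ ≤ M) ∧
    Y = fun ω => ψ fun j => X j ω

namespace IsBoundedPastFunctional

variable {X : ℕ → Ω → 𝓧} {n : ℕ} {Y Z : Ω → ℂ}

lemma mono (hY : IsBoundedPastFunctional X n Y) {n' : ℕ} (h : n ≤ n') :
    IsBoundedPastFunctional X n' Y := by
  obtain ⟨ψ, hψ, ⟨M, hM⟩, rfl⟩ := hY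
  exact ⟨fun v => ψ fun j => v (Fin.castLE (by omega) j), by fun_prop, ⟨M, fun _ => hM _⟩, rfl⟩

lemma mul (hY : IsBoundedPastFunctional X n Y) (hZ : IsBoundedPastFunctional X n Z) :
    IsBoundedPastFunctional X n (Y * Z) := by
  obtain ⟨ψ, hψ, ⟨M, hM⟩, rfl⟩ := hY
  obtain ⟨χ, hχ, ⟨L, hL⟩, rfl⟩ := hZ
  refine ⟨ψ * χ, hψ.mul hχ, ⟨M * L, fun v => ?_⟩, rfl⟩
  rw [Pi.mul_apply, norm_mul]
  exact mul_le_mul (hM v) (hL v) (norm_nonneg _) ((norm_nonneg _).trans (hM v))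

lemma one : IsBoundedPastFunctional X n 1 :=
  ⟨1, measurable_const, ⟨1, fun _ => by simp⟩, rfl⟩

lemma comp {g : 𝓧 → ℂ} (hg : Measurable g) {M : ℝ} (hgM : ∀ x, ‖g x‖ ≤ M) {k : ℕ}
    (hk : k ≤ n) : IsBoundedPastFunctional X n fun ω => g (X k ω) :=
  ⟨fun v => g (v ⟨k, by omega⟩), by fun_prop, ⟨M, fun _ => hgM _⟩, rfl⟩

lemma prod_comp {ι : Type*} (s : Finset ι) (t : ι → ℕ) (ht : ∀ j ∈ s, t j ≤ n) {g : 𝓧 → ℂ}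
    (hg : Measurable g) {M : ℝ} (hgM : ∀ x, ‖g x‖ ≤ M) :
    IsBoundedPastFunctional X n fun ω => ∏ j ∈ s, g (X (t j) ω) := by
  have key : IsBoundedPastFunctional X n (∏ j ∈ s, fun ω => g (X (t j) ω)) :=
    Finset.prod_induction _ _ (fun _ _ => mul) one fun j hj => comp hg hgM (ht j hj)
  simpa [Finset.prod_fn] using key

lemma exists_bound (hY : IsBoundedPastFunctional X n Y) : ∃ M, ∀ ω, ‖Y ω‖ ≤ M := by
  obtain ⟨ψ, -, ⟨M, hM⟩, rfl⟩ := hY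
  exact ⟨M, fun _ => hM _⟩

variable [MeasurableSpace Ω] {P : Measure Ω} [IsFiniteMeasure P]

lemma measurable (hY : IsBoundedPastFunctional X n Y) (hX : ∀ i, Measurable (X i)) :
    Measurable Y := by
  obtain ⟨ψ, hψ, -, rfl⟩ := hY
  exact hψ.comp (measurable_pi_lambda _ fun j => hX j)

lemma integrable (hY : IsBoundedPastFunctional X n Y) (hX : ∀ i, Measurable (X i)) :
    Integrable Y P :=
  let ⟨L, hL⟩ := hY.exists_bound
  Integrable.of_bound (hY.measurable hX).aestronglyMeasurable L (ae_of_all _ hL)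

lemma integrable_mul (hY : IsBoundedPastFunctional X n Y) (hX : ∀ i, Measurable (X i))
    {g : 𝓧 → ℂ} (hg : Measurable g) {M : ℝ} (hgM : ∀ x, ‖g x‖ ≤ M) (k : ℕ) :
    Integrable (fun ω => Y ω * g (X k ω)) P := by
  obtain ⟨L, hL⟩ := hY.exists_bound
  refine Integrable.of_bound ((hY.measurable hX).mul (hg.comp (hX k))).aestronglyMeasurable
    (L * M) (ae_of_all _ fun ω => ?_)
  rw [norm_mul]
  exact mul_le_mul (hL ω) (hgM _) (norm_nonneg _) ((norm_nonneg _).trans (hL ω))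

end IsBoundedPastFunctional

end PastFunctional

section MarkovProperty

variable {Ω 𝓧 : Type*} [MeasurableSpace Ω] [MeasurableSpace 𝓧] {P : Measure Ω}
  [IsProbabilityMeasure P] {X : ℕ → Ω → 𝓧} {κ : Kernel 𝓧 𝓧} [IsMarkovKernel κ] {n : ℕ}
  {ν : Measure 𝓧} {M : ℝ} {f c : 𝓧 → ℂ}

lemma integrable_mul_comp_sub_integral (hX : ∀ i, Measurable (X i))
    {h : (Fin (n + 1) → 𝓧) → ℝ} (hh : Measurable h) {L : ℝ} (hhL : ∀ v, |h v| ≤ L)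
    {u : 𝓧 → ℝ} (hu : Measurable u) (huM : ∀ x, |u x| ≤ M) :
    Integrable (fun ω => h (fun j => X j ω) * (u (X (n + 1) ω) - ∫ y, u y ∂(κ (X n ω)))) P := by
  refine Integrable.of_bound (((hh.comp (measurable_pi_lambda _ fun j => hX j)).mul
    ((hu.comp (hX _)).sub (hu.stronglyMeasurable.integral_kernel.measurable.comp (hX n))))
    |>.aestronglyMeasurable) (L * (M + M)) (ae_of_all _ fun ω => ?_)
  rw [norm_mul, Real.norm_eq_abs, Real.norm_eq_abs]
  exact mul_le_mul (hhL _)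
    ((abs_sub _ _).trans (add_le_add (huM _) (abs_integral_le_of_abs_le huM)))
    (abs_nonneg _) ((abs_nonneg _).trans (hhL fun j => X j ω))

lemma IsMarkovChain.integral_mul_comp_sub_integral_eq_zero (hX : ∀ i, Measurable (X i))
    (hM : IsMarkovChain P X κ) {h : (Fin (n + 1) → 𝓧) → ℝ} (hh : Measurable h) {L : ℝ}
    (hhL : ∀ v, |h v| ≤ L) {u : 𝓧 → ℝ} (hu : Measurable u) (huM : ∀ x, |u x| ≤ M) :
    ∫ ω, h (fun j => X j ω) * (u (X (n + 1) ω) - ∫ y, u y ∂(κ (X n ω))) ∂P = 0 := by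
  have bound : ∀ a : Ω → ℝ, Measurable a → (∀ ω, |a ω| ≤ M) →
      Integrable (fun ω => h (fun j => X j ω) * a ω) P := fun a ha haM =>
    Integrable.of_bound ((hh.comp (measurable_pi_lambda _ fun j => hX j)).mul ha
      |>.aestronglyMeasurable) (L * M) (ae_of_all _ fun ω => by
        rw [norm_mul, Real.norm_eq_abs, Real.norm_eq_abs]
        exact mul_le_mul (hhL _) (haM ω) (abs_nonneg _) ((abs_nonneg _).trans (hhL fun j => X j ω)))
  simp_rw [mul_sub]
  rw [integral_sub (bound (fun ω => u (X (n + 1) ω)) (hu.comp (hX _)) fun _ => huM _)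
    (bound (fun ω => ∫ y, u y ∂(κ (X n ω)))
      (hu.stronglyMeasurable.integral_kernel.measurable.comp (hX n))
      fun _ => abs_integral_le_of_abs_le huM),
    hM n u hu ⟨M, huM⟩ h hh ⟨L, hhL⟩, sub_self]

lemma IsMarkovChain.integral_mul_sub_markovOp_eq_zero (hX : ∀ i, Measurable (X i))
    (hM : IsMarkovChain P X κ) {ψ : (Fin (n + 1) → 𝓧) → ℂ} (hψ : Measurable ψ) {L : ℝ}
    (hL : ∀ v, ‖ψ v‖ ≤ L) {g : 𝓧 → ℂ} (hg : Measurable g) (hgM : ∀ x, ‖g x‖ ≤ M) :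
    ∫ ω, ψ (fun j => X j ω) * (g (X (n + 1) ω) - markovOp κ g (X n ω)) ∂P = 0 := by
  -- The Markov property is assumed for real observables: split into real and imaginary parts.
  have hgκ : ∀ x, Integrable g (κ x) := fun x =>
    Integrable.of_bound hg.aestronglyMeasurable M (ae_of_all _ hgM)
  have hre : ∀ x, (markovOp κ g x).re = ∫ y, (g y).re ∂(κ x) := fun x => by
    simpa [markovOp] using (integral_re (hgκ x)).symm
  have him : ∀ x, (markovOp κ g x).im = ∫ y, (g y).im ∂(κ x) := fun x => by
    simpa [markovOp] using (integral_im (hgκ x)).symm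
  have hψr : ∀ v, |(ψ v).re| ≤ L := fun v => (Complex.abs_re_le_norm _).trans (hL v)
  have hψi : ∀ v, |(ψ v).im| ≤ L := fun v => (Complex.abs_im_le_norm _).trans (hL v)
  have hgr : ∀ x, |(g x).re| ≤ M := fun x => (Complex.abs_re_le_norm _).trans (hgM x)
  have hgi : ∀ x, |(g x).im| ≤ M := fun x => (Complex.abs_im_le_norm _).trans (hgM x)
  have hψrm : Measurable fun v => (ψ v).re := by fun_prop
  have hψim : Measurable fun v => (ψ v).im := by fun_prop
  have hgrm : Measurable fun x => (g x).re := by fun_prop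
  have hgim : Measurable fun x => (g x).im := by fun_prop
  have hY : IsBoundedPastFunctional X n fun ω => ψ fun j => X j ω := ⟨ψ, hψ, ⟨L, hL⟩, rfl⟩
  have hF := ((hY.integrable_mul (P := P) hX hg hgM (n + 1)).sub (hY.integrable_mul hX
    (measurable_markovOp (κ := κ) hg) (norm_markovOp_le hgM) n)).congr
      (ae_of_all _ fun ω => (mul_sub _ _ _).symm)
  apply Complex.ext
  · rw [Complex.zero_re, ← RCLike.re_to_complex, ← integral_re hF]
    simp only [RCLike.re_to_complex, Complex.mul_re, Complex.sub_re, Complex.sub_im, hre, him]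
    rw [integral_sub (integrable_mul_comp_sub_integral hX hψrm hψr hgrm hgr)
        (integrable_mul_comp_sub_integral hX hψim hψi hgim hgi),
      hM.integral_mul_comp_sub_integral_eq_zero hX hψrm hψr hgrm hgr,
      hM.integral_mul_comp_sub_integral_eq_zero hX hψim hψi hgim hgi, sub_zero]
  · rw [Complex.zero_im, ← RCLike.im_to_complex, ← integral_im hF]
    simp only [RCLike.im_to_complex, Complex.mul_im, Complex.sub_re, Complex.sub_im, hre, him]
    rw [integral_add (integrable_mul_comp_sub_integral hX hψrm hψr hgim hgi)
        (integrable_mul_comp_sub_integral hX hψim hψi hgrm hgr),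
      hM.integral_mul_comp_sub_integral_eq_zero hX hψrm hψr hgim hgi,
      hM.integral_mul_comp_sub_integral_eq_zero hX hψim hψi hgrm hgr, add_zero]

lemma IsMarkovChain.integral_mul_comp_succ (hX : ∀ i, Measurable (X i))
    (hM : IsMarkovChain P X κ) {Y : Ω → ℂ} (hY : IsBoundedPastFunctional X n Y) {g : 𝓧 → ℂ}
    (hg : Measurable g) (hgM : ∀ x, ‖g x‖ ≤ M) :
    ∫ ω, Y ω * g (X (n + 1) ω) ∂P = ∫ ω, Y ω * markovOp κ g (X n ω) ∂P := by
  rw [← sub_eq_zero, ← integral_sub (hY.integrable_mul hX hg hgM _)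
    (hY.integrable_mul hX (measurable_markovOp hg) (norm_markovOp_le hgM) _)]
  obtain ⟨ψ, hψ, ⟨L, hL⟩, rfl⟩ := hY
  simp_rw [← mul_sub]
  exact hM.integral_mul_sub_markovOp_eq_zero hX hψ hL hg hgM

lemma IsMarkovChain.integral_mul_comp_add (hX : ∀ i, Measurable (X i))
    (hM : IsMarkovChain P X κ) {Y : Ω → ℂ} (hY : IsBoundedPastFunctional X n Y) (k : ℕ)
    {g : 𝓧 → ℂ} (hg : Measurable g) (hgM : ∀ x, ‖g x‖ ≤ M) :
    ∫ ω, Y ω * g (X (n + k) ω) ∂P = ∫ ω, Y ω * (markovOp κ)^[k] g (X n ω) ∂P := by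
  induction k generalizing g with
  | zero => rfl
  | succ k ih =>
    rw [← add_assoc, hM.integral_mul_comp_succ hX (hY.mono (Nat.le_add_right n k)) hg hgM,
      ih (measurable_markovOp hg) (norm_markovOp_le hgM), Function.iterate_succ_apply]

lemma IsMarkovChain.map_eq (hX : ∀ i, Measurable (X i)) (hM : IsMarkovChain P X κ)
    (hinv : ν.bind κ = ν) (hinit : Measure.map (X 0) P = ν) (k : ℕ) :
    Measure.map (X k) P = ν := by
  have : IsFiniteMeasure ν := hinit ▸ inferInstance
  induction k with
  | zero => exact hinit
  | succ k ih =>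
    ext A hA
    have hIA : ∀ x, |A.indicator (1 : 𝓧 → ℝ) x| ≤ 1 := fun x => by
      by_cases hx : x ∈ A <;> simp [hx]
    have hmk := hM k (A.indicator 1) (measurable_one.indicator hA) ⟨1, hIA⟩ (fun _ => 1)
      measurable_const ⟨1, fun _ => by simp⟩
    simp only [one_mul, integral_indicator_one hA] at hmk
    have hκA : Measurable fun x => κ x A := κ.measurable_coe hA
    rw [← ENNReal.toReal_eq_toReal_iff' (measure_ne_top _ _) (measure_ne_top _ _)]
    calc (Measure.map (X (k + 1)) P A).toReal
        = ∫ ω, A.indicator 1 (X (k + 1) ω) ∂P := by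
          rw [← integral_map (hX _).aemeasurable (measurable_one.indicator hA).aestronglyMeasurable,
            integral_indicator_one hA, measureReal_def]
      _ = ∫ x, (κ x A).toReal ∂(Measure.map (X k) P) := by
          rw [hmk, integral_map (hX k).aemeasurable hκA.ennreal_toReal.aestronglyMeasurable]
          rfl
      _ = (ν A).toReal := by
          rw [ih, integral_toReal hκA.aemeasurable (ae_of_all _ fun x => measure_lt_top _ _),
            ← Measure.bind_apply hA κ.aemeasurable, hinv]

lemma IsMarkovChain.integral_comp (hX : ∀ i, Measurable (X i)) (hM : IsMarkovChain P X κ)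
    (hinv : ν.bind κ = ν) (hinit : Measure.map (X 0) P = ν) (k : ℕ)
    {E : Type*} [NormedAddCommGroup E] [NormedSpace ℝ E] {g : 𝓧 → E}
    (hg : AEStronglyMeasurable g ν) : ∫ ω, g (X k ω) ∂P = ∫ x, g x ∂ν := by
  rw [← hM.map_eq hX hinv hinit k] at hg ⊢
  exact (integral_map (hX k).aemeasurable hg).symm

lemma IsMarkovChain.integral_mul_prod_eq_tailOp (hX : ∀ i, Measurable (X i))
    (hM : IsMarkovChain P X κ) (hf : Measurable f) (hf1 : ∀ x, ‖f x‖ ≤ 1) (hc : Measurable c)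
    (hcM : ∀ x, ‖c x‖ ≤ M) (k : ℕ) {τ : ℕ → ℕ} (hτ : Monotone τ) {Y : Ω → ℂ}
    (hY : IsBoundedPastFunctional X n Y) (hn : n ≤ τ 0) :
    ∫ ω, Y ω * ((∏ j ∈ Finset.range (k + 1), f (X (τ j) ω)) * c (X (τ k) ω)) ∂P
      = ∫ ω, Y ω * (f (X (τ 0) ω) * tailOp κ f τ k c (X (τ 0) ω)) ∂P := by
  induction k generalizing τ n Y with
  | zero => simp [tailOp]
  | succ k ih =>
    have hY' : IsBoundedPastFunctional X (τ 0) fun ω => Y ω * f (X (τ 0) ω) :=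
      (hY.mono hn).mul (IsBoundedPastFunctional.comp hf hf1 le_rfl)
    have hτ01 : τ 0 + (τ 1 - τ 0) = τ 1 := Nat.add_sub_cancel' (hτ (Nat.zero_le 1))
    calc ∫ ω, Y ω * ((∏ j ∈ Finset.range (k + 2), f (X (τ j) ω)) * c (X (τ (k + 1)) ω)) ∂P
        = ∫ ω, (Y ω * f (X (τ 0) ω)) * ((∏ j ∈ Finset.range (k + 1), f (X (τ (j + 1)) ω))
            * c (X (τ (k + 1)) ω)) ∂P := by
          congr 1; funext ω; rw [Finset.prod_range_succ']; ring
      _ = ∫ ω, (Y ω * f (X (τ 0) ω)) * (f * tailOp κ f (fun j => τ (j + 1)) k c)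
            (X (τ 0 + (τ 1 - τ 0)) ω) ∂P := by
          rw [hτ01]
          exact ih (fun a b hab => hτ (by omega)) hY' (hτ (Nat.zero_le 1))
      _ = ∫ ω, Y ω * (f (X (τ 0) ω) * tailOp κ f τ (k + 1) c (X (τ 0) ω)) ∂P := by
          rw [hM.integral_mul_comp_add hX hY' _ (hf.mul (measurable_tailOp hf hc _ _))
            (M := M) fun x => ?_]
          · simp only [tailOp, mul_assoc]
          · rw [Pi.mul_apply, norm_mul]
            exact (mul_le_mul_of_nonneg_right (hf1 x) (norm_nonneg _)).trans
              (by simpa using norm_tailOp_le hf1 hcM k _ x)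

end MarkovProperty

section BlockCovariance

variable {Ω 𝓧 : Type*} [MeasurableSpace Ω] [MeasurableSpace 𝓧] {P : Measure Ω}
  [IsProbabilityMeasure P] {X : ℕ → Ω → 𝓧} {κ : Kernel 𝓧 𝓧} [IsMarkovKernel κ]
  {ν : Measure 𝓧} {f g : 𝓧 → ℂ} {i : ℕ → ℕ} {q p : ℕ}

noncomputable def complexCov (P : Measure Ω) (U V : Ω → ℂ) : ℂ :=
  (∫ ω, U ω * V ω ∂P) - (∫ ω, U ω ∂P) * ∫ ω, V ω ∂P

lemma IsMarkovChain.integral_mul_prod_Icc (hX : ∀ i, Measurable (X i))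
    (hM : IsMarkovChain P X κ) (hf : Measurable f) (hf1 : ∀ x, ‖f x‖ ≤ 1) (hi : Monotone i)
    (hqp : q ≤ p) {n : ℕ} {Y : Ω → ℂ} (hY : IsBoundedPastFunctional X n Y) (hn : n ≤ i q) :
    ∫ ω, Y ω * ∏ j ∈ Finset.Icc q p, f (X (i j) ω) ∂P
      = ∫ ω, Y ω * (f * tailOp κ f (fun j => i (q + j)) (p - q) 1) (X (i q) ω) ∂P := by
  have hprod : ∀ ω, ∏ j ∈ Finset.Icc q p, f (X (i j) ω)
      = (∏ j ∈ Finset.range (p - q + 1), f (X (i (q + j)) ω))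
        * (1 : 𝓧 → ℂ) (X (i (q + (p - q))) ω) := fun ω => by
    rw [← Finset.Ico_add_one_right_eq_Icc, Finset.prod_Ico_eq_prod_range, Pi.one_apply, mul_one,
      show p + 1 - q = p - q + 1 by omega]
  simp_rw [hprod]
  exact hM.integral_mul_prod_eq_tailOp hX hf hf1 measurable_const (fun _ => norm_one.le)
    (p - q) (fun a b hab => hi (by omega)) hY hn

lemma IsMarkovChain.complexCov_prod_eq (hX : ∀ i, Measurable (X i)) (hM : IsMarkovChain P X κ)
    (hinv : ν.bind κ = ν) (hinit : Measure.map (X 0) P = ν) (hf : Measurable f)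
    (hf1 : ∀ x, ‖f x‖ ≤ 1) (hi : Monotone i) (hq : 1 ≤ q) (hqp : q ≤ p) :
    complexCov P (fun ω => ∏ j ∈ Finset.range q, f (X (i j) ω))
        (fun ω => ∏ j ∈ Finset.Icc q p, f (X (i j) ω))
      = ∫ ω, (∏ j ∈ Finset.range q, f (X (i j) ω)) *
          ((markovOp κ)^[i q - i (q - 1)] (f * tailOp κ f (fun j => i (q + j)) (p - q) 1)
              (X (i (q - 1)) ω)
            - ∫ x, (f * tailOp κ f (fun j => i (q + j)) (p - q) 1) x ∂ν) ∂P := by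
  set φ := f * tailOp κ f (fun j => i (q + j)) (p - q) 1
  have hφ : Measurable φ := hf.mul (measurable_tailOp hf measurable_const _ _)
  have hφ1 : ∀ x, ‖φ x‖ ≤ 1 := norm_mul_tailOp_one_le hf1 _ _
  have hH : IsBoundedPastFunctional X (i (q - 1)) fun ω => ∏ j ∈ Finset.range q, f (X (i j) ω) :=
    .prod_comp _ _ (fun j hj => hi (by simp only [Finset.mem_range] at hj; omega)) hf hf1
  have hE₁₂ : ∫ ω, (∏ j ∈ Finset.range q, f (X (i j) ω)) * ∏ j ∈ Finset.Icc q p, f (X (i j) ω) ∂P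
      = ∫ ω, (∏ j ∈ Finset.range q, f (X (i j) ω)) *
          (markovOp κ)^[i q - i (q - 1)] φ (X (i (q - 1)) ω) ∂P := by
    rw [hM.integral_mul_prod_Icc hX hf hf1 hi hqp hH (hi (by omega)),
      ← hM.integral_mul_comp_add hX hH _ hφ hφ1, Nat.add_sub_cancel' (hi (by omega))]
  have hE₂ : ∫ ω, ∏ j ∈ Finset.Icc q p, f (X (i j) ω) ∂P = ∫ x, φ x ∂ν := by
    have h := hM.integral_mul_prod_Icc hX hf hf1 hi hqp IsBoundedPastFunctional.one
      (Nat.zero_le _)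
    simp only [Pi.one_apply, one_mul] at h
    rw [h, hM.integral_comp hX hinv hinit _ hφ.aestronglyMeasurable]
  rw [complexCov, hE₁₂, hE₂, ← integral_mul_const, ← integral_sub]
  · simp_rw [mul_sub]
  · exact hH.integrable_mul hX (measurable_iterate_markovOp hφ _)
      (norm_iterate_markovOp_le hφ1 _) _
  · exact (hH.integrable hX).mul_const _

variable [IsProbabilityMeasure ν] {m s : ℝ≥0∞} [ENNReal.HolderTriple s m 1] {M : ℝ}

lemma IsMarkovChain.norm_integral_prod_mul_le (hX : ∀ i, Measurable (X i))
    (hM : IsMarkovChain P X κ) (hinv : ν.bind κ = ν) (hinit : Measure.map (X 0) P = ν)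
    (hf : Measurable f) (hf1 : ∀ x, ‖f x‖ ≤ 1) (hg : Measurable g) (hgM : ∀ x, ‖g x‖ ≤ M)
    (hq : 1 ≤ q) :
    ‖∫ ω, (∏ j ∈ Finset.range q, f (X (i j) ω)) * g (X (i (q - 1)) ω) ∂P‖
      ≤ (eLpNorm f s ν).toReal * (eLpNorm g m ν).toReal := by
  obtain ⟨q, rfl⟩ : ∃ q', q = q' + 1 := ⟨q - 1, by omega⟩
  rw [Nat.add_sub_cancel]
  calc _ ≤ ∫ ω, ‖(∏ j ∈ Finset.range (q + 1), f (X (i j) ω)) * g (X (i q) ω)‖ ∂P :=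
        norm_integral_le_integral_norm _
    _ ≤ ∫ ω, ‖f (X (i q) ω)‖ * ‖g (X (i q) ω)‖ ∂P := by
        refine integral_mono_of_nonneg (ae_of_all _ fun _ => norm_nonneg _)
          (Integrable.of_bound (by fun_prop) (1 * M) (ae_of_all _ fun ω => ?_))
          (ae_of_all _ fun ω => ?_)
        · rw [Real.norm_of_nonneg (by positivity)]
          exact mul_le_mul (hf1 _) (hgM _) (norm_nonneg _) zero_le_one
        · dsimp only
          rw [norm_mul]
          exact mul_le_mul_of_nonneg_right (norm_prod_range_succ_le (fun j => hf1 _) q)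
            (norm_nonneg _)
    _ = ∫ x, ‖f x‖ * ‖g x‖ ∂ν :=
        hM.integral_comp hX hinv hinit _ (hf.norm.mul hg.norm).aestronglyMeasurable
    _ ≤ _ := integral_norm_mul_norm_le (.of_bound hf.aestronglyMeasurable 1 (ae_of_all _ hf1))
        (.of_bound hg.aestronglyMeasurable M (ae_of_all _ hgM))

lemma IsMarkovChain.norm_integral_prod_mul_le_tailOp (hX : ∀ i, Measurable (X i))
    (hM : IsMarkovChain P X κ) (hinv : ν.bind κ = ν) (hinit : Measure.map (X 0) P = ν)
    (hf : Measurable f) (hf1 : ∀ x, ‖f x‖ ≤ 1) (hg : Measurable g) (hgM : ∀ x, ‖g x‖ ≤ M)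
    (hi : Monotone i) (hq : 1 ≤ q) :
    ‖∫ ω, (∏ j ∈ Finset.range q, f (X (i j) ω)) * g (X (i (q - 1)) ω) ∂P‖
      ≤ (eLpNorm f s ν).toReal * (eLpNorm (tailOp κ f i (q - 1) g) m ν).toReal := by
  obtain ⟨q, rfl⟩ : ∃ q', q = q' + 1 := ⟨q - 1, by omega⟩
  rw [Nat.add_sub_cancel]
  have hW := measurable_tailOp (κ := κ) hf hg q i
  have h := hM.integral_mul_prod_eq_tailOp hX hf hf1 hg hgM q hi IsBoundedPastFunctional.one
    (Nat.zero_le _)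
  simp only [Pi.one_apply, one_mul] at h
  rw [h, hM.integral_comp hX hinv hinit _ (g := fun x => f x * tailOp κ f i q g x)
    (hf.mul hW).aestronglyMeasurable]
  calc _ ≤ ∫ x, ‖f x * tailOp κ f i q g x‖ ∂ν := norm_integral_le_integral_norm _
    _ = ∫ x, ‖f x‖ * ‖tailOp κ f i q g x‖ ∂ν := by simp_rw [norm_mul]
    _ ≤ _ := integral_norm_mul_norm_le (.of_bound hf.aestronglyMeasurable 1 (ae_of_all _ hf1))
        (.of_bound hW.aestronglyMeasurable M (ae_of_all _ (norm_tailOp_le hf1 hgM q i)))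

end BlockCovariance

section ProductBound

variable {𝓧 B : Type*} [NormedAddCommGroup B] [NormedSpace ℂ B] {ι : B →ₗ[ℂ] 𝓧 → ℂ} {C : ℝ}
  {ℓ : ℕ}

def HasProductBound (ι : B →ₗ[ℂ] 𝓧 → ℂ) (C : ℝ) (ℓ : ℕ) : Prop :=
  ∀ f g : B, (∀ x, ‖ι f x‖ ≤ 1) → (∀ x, ‖ι g x‖ ≤ 1) →
    ∃ h : B, (∀ x, ι h x = ι f x * ι g x) ∧ ‖h‖ ≤ C * max ‖f‖ ‖g‖ ^ ℓ

lemma HasProductBound.mono (hE : HasProductBound ι C ℓ) {C' : ℝ} (hC : C ≤ C') :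
    HasProductBound ι C' ℓ := fun f g hf hg =>
  (hE f g hf hg).imp fun _ ⟨hh, hhn⟩ => ⟨hh, hhn.trans (by gcongr)⟩

lemma norm_apply_real_smul_le {b : B} {M : ℝ} (hb : ∀ x, ‖ι b x‖ ≤ M) {t : ℝ} (ht : 0 ≤ t)
    (x : 𝓧) : ‖ι ((t : ℂ) • b) x‖ ≤ t * M := by
  rw [map_smul, Pi.smul_apply, norm_smul, Complex.norm_real, Real.norm_of_nonneg ht]
  exact mul_le_mul_of_nonneg_left (hb x) ht

lemma norm_ofReal_div_norm_smul {b : B} (hb : b ≠ 0) {ρ : ℝ} (hρ : 0 ≤ ρ) :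
    ‖((ρ / ‖b‖ : ℝ) : ℂ) • b‖ = ρ := by
  rw [norm_smul, Complex.norm_real, Real.norm_of_nonneg (by positivity),
    div_mul_cancel₀ _ (norm_ne_zero_iff.mpr hb)]

/-- Rescaling both factors to the common norm `ρ = min ‖u‖ (‖w‖ / M)` makes the bound of
`HasProductBound` homogeneous of degree one in `w`. -/
lemma HasProductBound.exists_mul_le (hE : HasProductBound ι C ℓ) (hC : 0 ≤ C) (hℓ : 2 ≤ ℓ)
    {u w : B} (hu : ∀ x, ‖ι u x‖ ≤ 1) {M : ℝ} (hw : ∀ x, ‖ι w x‖ ≤ M) :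
    ∃ h : B, ι h = ι u * ι w ∧ ‖h‖ ≤ C * ‖u‖ ^ (ℓ - 1) * ‖w‖ := by
  rcases eq_or_ne u 0 with rfl | hu0
  · exact ⟨0, by simp, by rw [norm_zero]; positivity⟩
  rcases eq_or_ne w 0 with rfl | hw0
  · exact ⟨0, by simp, by rw [norm_zero]; positivity⟩
  obtain ⟨n, rfl⟩ : ∃ n, ℓ = n + 2 := ⟨ℓ - 2, by omega⟩
  have ha := norm_pos_iff.mpr hu0
  have hb := norm_pos_iff.mpr hw0
  have hM : 0 < max M 1 := lt_max_of_lt_right one_pos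
  set ρ := min ‖u‖ (‖w‖ / max M 1)
  have hρ : 0 < ρ := lt_min ha (div_pos hb hM)
  have hρa : ρ ≤ ‖u‖ := min_le_left _ _
  have hρb : ρ * max M 1 ≤ ‖w‖ := (le_div_iff₀ hM).mp (min_le_right _ _)
  have hs : 0 ≤ ρ / ‖u‖ := by positivity
  have ht : 0 ≤ ρ / ‖w‖ := by positivity
  obtain ⟨h, hh, hhn⟩ := hE (((ρ / ‖u‖ : ℝ) : ℂ) • u) (((ρ / ‖w‖ : ℝ) : ℂ) • w)
    (fun x => (norm_apply_real_smul_le hu hs x).trans (by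
      rw [mul_one]; exact (div_le_one ha).mpr hρa))
    (fun x => (norm_apply_real_smul_le hw ht x).trans (by
      rw [div_mul_eq_mul_div, div_le_one hb]
      exact (mul_le_mul_of_nonneg_left (le_max_left M 1) hρ.le).trans hρb))
  rw [norm_ofReal_div_norm_smul hu0 hρ.le, norm_ofReal_div_norm_smul hw0 hρ.le, max_self] at hhn
  refine ⟨((‖u‖ * ‖w‖ / ρ ^ 2 : ℝ) : ℂ) • h, funext fun x => ?_, ?_⟩
  · have : (ρ : ℂ) ≠ 0 := by exact_mod_cast hρ.ne'
    have : (‖u‖ : ℂ) ≠ 0 := by exact_mod_cast ha.ne'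
    have : (‖w‖ : ℂ) ≠ 0 := by exact_mod_cast hb.ne'
    simp only [map_smul, Pi.smul_apply, hh, smul_eq_mul, Pi.mul_apply, Complex.ofReal_div,
      Complex.ofReal_mul, Complex.ofReal_pow]
    field_simp
  · rw [norm_smul, Complex.norm_real, Real.norm_of_nonneg (by positivity)]
    calc ‖u‖ * ‖w‖ / ρ ^ 2 * ‖h‖ ≤ ‖u‖ * ‖w‖ / ρ ^ 2 * (C * ρ ^ (n + 2)) := by gcongr
      _ = C * ρ ^ n * ‖u‖ * ‖w‖ := by field_simp; ring
      _ ≤ C * ‖u‖ ^ n * ‖u‖ * ‖w‖ := by gcongr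
      _ = C * ‖u‖ ^ (n + 2 - 1) * ‖w‖ := by rw [show n + 2 - 1 = n + 1 by omega, pow_succ]; ring

end ProductBound

section FunctionSpace

variable {𝓧 B : Type*} [MeasurableSpace 𝓧] [NormedAddCommGroup B] [NormedSpace ℂ B]
  {ι : B →ₗ[ℂ] 𝓧 → ℂ} {κ : Kernel 𝓧 𝓧} {ν : Measure 𝓧} {PB : B →L[ℂ] B} {m : ℝ≥0∞}
  {K C D : ℝ} {ℓ : ℕ} {f : B}

lemma MarkovOpCompat.iterate (hPB : MarkovOpCompat ι κ PB) (k : ℕ) (b : B) :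
    ι ((PB ^ k) b) = (markovOp κ)^[k] (ι b) := by
  induction k with
  | zero => rfl
  | succ k ih =>
    rw [pow_succ', Function.iterate_succ_apply', ← ih]
    exact funext (hPB _)

lemma toReal_eLpNorm_le (hK : 0 ≤ K)
    (hKle : ∀ b : B, eLpNorm (ι b) m ν ≤ ENNReal.ofReal (K * ‖b‖)) (b : B) :
    (eLpNorm (ι b) m ν).toReal ≤ K * ‖b‖ :=
  ENNReal.toReal_le_of_le_ofReal (by positivity) (hKle b)

lemma norm_integral_le_of_eLpNorm_le [IsProbabilityMeasure ν] (hm : 1 ≤ m)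
    (hmeas : ∀ b, Measurable (ι b)) (hK : 0 ≤ K)
    (hKle : ∀ b : B, eLpNorm (ι b) m ν ≤ ENNReal.ofReal (K * ‖b‖)) (b : B) :
    ‖∫ x, ι b x ∂ν‖ ≤ K * ‖b‖ :=
  calc ‖∫ x, ι b x ∂ν‖ ≤ ∫ x, ‖ι b x‖ ∂ν := norm_integral_le_integral_norm _
    _ = (eLpNorm (ι b) 1 ν).toReal := by
      rw [eLpNorm_one_eq_lintegral_enorm,
        integral_norm_eq_lintegral_enorm (hmeas b).aestronglyMeasurable]
    _ ≤ (eLpNorm (ι b) m ν).toReal :=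
      ENNReal.toReal_mono ((hKle b).trans_lt ENNReal.ofReal_lt_top).ne
        (eLpNorm_le_eLpNorm_of_exponent_le hm (hmeas b).aestronglyMeasurable)
    _ ≤ K * ‖b‖ := toReal_eLpNorm_le hK hKle b

lemma CondC.norm_pow_apply_le {one : B} {κc θ : ℝ} (hC : CondC ι ν one PB κc θ) (hκc : 0 ≤ κc)
    (hθ : θ ∈ Set.Ico (0 : ℝ) 1) (hνK : ∀ b : B, ‖∫ x, ι b x ∂ν‖ ≤ K * ‖b‖) (k : ℕ) (b : B) :
    ‖(PB ^ k) b‖ ≤ (κc + K * ‖one‖) * ‖b‖ :=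
  calc ‖(PB ^ k) b‖
      ≤ ‖(PB ^ k) b - (∫ x, ι b x ∂ν) • one‖ + ‖(∫ x, ι b x ∂ν) • one‖ :=
        norm_le_norm_sub_add _ _
    _ ≤ κc * ‖b‖ * 1 + K * ‖b‖ * ‖one‖ := by
      rw [norm_smul]
      refine add_le_add ((hC b k).trans ?_) (mul_le_mul_of_nonneg_right (hνK b) (norm_nonneg _))
      exact mul_le_mul_of_nonneg_left (pow_le_one₀ hθ.1 hθ.2.le) (by positivity)
    _ = (κc + K * ‖one‖) * ‖b‖ := by ring

variable [IsMarkovKernel κ]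

lemma exists_eq_tailOp_norm_le (hf : ∀ x, ‖ι f x‖ ≤ 1) {A : ℝ} (hA : 0 ≤ A)
    (hstep : ∀ (u : B) (M : ℝ), (∀ x, ‖ι u x‖ ≤ M) → ∀ g : ℕ,
      ∃ w : B, ι w = (markovOp κ)^[g] (ι f * ι u) ∧ ‖w‖ ≤ A * ‖u‖)
    {c : B} {M : ℝ} (hc : ∀ x, ‖ι c x‖ ≤ M) (k : ℕ) (τ : ℕ → ℕ) :
    ∃ w : B, ι w = tailOp κ (ι f) τ k (ι c) ∧ ‖w‖ ≤ A ^ k * ‖c‖ := by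
  induction k generalizing τ with
  | zero => exact ⟨c, rfl, by simp⟩
  | succ k ih =>
    obtain ⟨u, hu, hun⟩ := ih fun j => τ (j + 1)
    obtain ⟨w, hw, hwn⟩ := hstep u M (fun x => hu ▸ norm_tailOp_le hf hc k _ x) (τ 1 - τ 0)
    refine ⟨w, by rw [hw, hu]; rfl, hwn.trans ?_⟩
    rw [pow_succ', mul_assoc]
    exact mul_le_mul_of_nonneg_left hun hA

lemma exists_eq_mul_tailOp_one_norm_le (hf : ∀ x, ‖ι f x‖ ≤ 1) (R : ℕ → ℝ)
    (h₀ : ∃ a : B, ι a = ι f ∧ ‖a‖ ≤ R 0)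
    (hstep : ∀ (k : ℕ) (u : B), (∀ x, ‖ι u x‖ ≤ 1) → ‖u‖ ≤ R k → ∀ g : ℕ,
      ∃ w : B, ι w = ι f * (markovOp κ)^[g] (ι u) ∧ ‖w‖ ≤ R (k + 1))
    (k : ℕ) (τ : ℕ → ℕ) :
    ∃ w : B, ι w = ι f * tailOp κ (ι f) τ k 1 ∧ ‖w‖ ≤ R k := by
  induction k generalizing τ with
  | zero =>
    obtain ⟨a, ha, han⟩ := h₀
    exact ⟨a, by rw [ha, tailOp, mul_one], han⟩
  | succ k ih =>
    obtain ⟨u, hu, hun⟩ := ih fun j => τ (j + 1)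
    obtain ⟨w, hw, hwn⟩ := hstep k u (hu ▸ norm_mul_tailOp_one_le hf k _) hun (τ 1 - τ 0)
    exact ⟨w, by rw [hw, hu]; rfl, hwn⟩

lemma HasProductBound.exists_mul_iterate_le (hE : HasProductBound ι C ℓ) (hC : 0 ≤ C)
    (hPB : MarkovOpCompat ι κ PB) (hPBD : ∀ k b, ‖(PB ^ k) b‖ ≤ D * ‖b‖)
    (hf : ∀ x, ‖ι f x‖ ≤ 1) {u : B} (hu : ∀ x, ‖ι u x‖ ≤ 1) (g : ℕ) :
    ∃ w : B, ι w = ι f * (markovOp κ)^[g] (ι u) ∧ ‖w‖ ≤ C * max ‖f‖ (D * ‖u‖) ^ ℓ := by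
  obtain ⟨w, hw, hwn⟩ := hE f ((PB ^ g) u) hf (fun x => by
    rw [hPB.iterate]; exact norm_iterate_markovOp_le hu g x)
  refine ⟨w, funext fun x => by rw [hw, hPB.iterate]; rfl, hwn.trans ?_⟩
  gcongr
  exact hPBD g u

lemma HasProductBound.exists_eq_mul_tailOp_one_norm_le_of_two_le (hE : HasProductBound ι C ℓ)
    (hC : 0 ≤ C) (hℓ : 2 ≤ ℓ) (hD : 0 ≤ D) (hPB : MarkovOpCompat ι κ PB)
    (hPBD : ∀ k b, ‖(PB ^ k) b‖ ≤ D * ‖b‖) (hf : ∀ x, ‖ι f x‖ ≤ 1) (k : ℕ) (τ : ℕ → ℕ) :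
    ∃ v : B, ι v = ι f * tailOp κ (ι f) τ k 1 ∧
      ‖v‖ ≤ (C * ‖f‖ ^ (ℓ - 1) * D) ^ k * ‖f‖ := by
  refine exists_eq_mul_tailOp_one_norm_le hf (fun k => (C * ‖f‖ ^ (ℓ - 1) * D) ^ k * ‖f‖)
    ⟨f, rfl, by simp⟩ (fun k u hu hun g => ?_) k τ
  obtain ⟨w, hw, hwn⟩ := hE.exists_mul_le hC hℓ hf (w := (PB ^ g) u) (M := 1)
    (fun x => by rw [hPB.iterate]; exact norm_iterate_markovOp_le hu g x)
  refine ⟨w, by rw [hw, hPB.iterate], hwn.trans ?_⟩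
  calc C * ‖f‖ ^ (ℓ - 1) * ‖(PB ^ g) u‖
      ≤ C * ‖f‖ ^ (ℓ - 1) * (D * ((C * ‖f‖ ^ (ℓ - 1) * D) ^ k * ‖f‖)) := by
        gcongr
        exact (hPBD g u).trans (by gcongr)
    _ = (C * ‖f‖ ^ (ℓ - 1) * D) ^ (k + 1) * ‖f‖ := by ring

lemma HasProductBound.exists_eq_tailOp_norm_le_of_two_le (hE : HasProductBound ι C ℓ)
    (hC : 0 ≤ C) (hℓ : 2 ≤ ℓ) (hD : 0 ≤ D) (hPB : MarkovOpCompat ι κ PB)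
    (hPBD : ∀ k b, ‖(PB ^ k) b‖ ≤ D * ‖b‖) (hf : ∀ x, ‖ι f x‖ ≤ 1) {c : B} {M : ℝ}
    (hc : ∀ x, ‖ι c x‖ ≤ M) (k : ℕ) (τ : ℕ → ℕ) :
    ∃ w : B, ι w = tailOp κ (ι f) τ k (ι c) ∧ ‖w‖ ≤ (C * ‖f‖ ^ (ℓ - 1) * D) ^ k * ‖c‖ := by
  refine exists_eq_tailOp_norm_le hf (by positivity) (fun u M hu g => ?_) hc k τ
  obtain ⟨h, hh, hhn⟩ := hE.exists_mul_le hC hℓ hf hu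
  refine ⟨(PB ^ g) h, by rw [hPB.iterate, hh], (hPBD g h).trans ?_⟩
  calc D * ‖h‖ ≤ D * (C * ‖f‖ ^ (ℓ - 1) * ‖u‖) := by gcongr
    _ = C * ‖f‖ ^ (ℓ - 1) * D * ‖u‖ := by ring

lemma HasProductBound.exists_eq_mul_tailOp_one_norm_le_of_lt_two (hE : HasProductBound ι C ℓ)
    (hℓ : ℓ < 2) (hC : 1 ≤ C) (hD : 1 ≤ D) (hPB : MarkovOpCompat ι κ PB)
    (hPBD : ∀ k b, ‖(PB ^ k) b‖ ≤ D * ‖b‖) {one : B} (hone : ι one = fun _ => 1)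
    (hf : ∀ x, ‖ι f x‖ ≤ 1) (k : ℕ) (τ : ℕ → ℕ) :
    ∃ v : B, ι v = ι f * tailOp κ (ι f) τ k 1 ∧ ‖v‖ ≤ C * (C * D) ^ k * ‖f‖ ^ ℓ := by
  have hCD : 1 ≤ C * D := one_le_mul_of_one_le_of_one_le hC hD
  have hstep := fun (u : B) hu g => hE.exists_mul_iterate_le (zero_le_one.trans hC) hPB hPBD hf
    (u := u) hu g
  interval_cases ℓ
  · refine exists_eq_mul_tailOp_one_norm_le hf (fun k => C * (C * D) ^ k * ‖f‖ ^ 0) ?_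
      (fun k u hu _ g => ?_) k τ
    · obtain ⟨a, ha, han⟩ := hE f one hf (fun x => by simp [hone])
      exact ⟨a, funext fun x => by simp [ha, hone], by simpa using han⟩
    · obtain ⟨w, hw, hwn⟩ := hstep u hu g
      refine ⟨w, hw, hwn.trans ?_⟩
      simp only [pow_zero, mul_one]
      exact le_mul_of_one_le_right (by linarith) (one_le_pow₀ hCD)
  · refine exists_eq_mul_tailOp_one_norm_le hf (fun k => C * (C * D) ^ k * ‖f‖ ^ 1)
      ⟨f, rfl, by simpa using le_mul_of_one_le_left (norm_nonneg f) hC⟩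
      (fun k u hu hun g => ?_) k τ
    obtain ⟨w, hw, hwn⟩ := hstep u hu g
    refine ⟨w, hw, hwn.trans ?_⟩
    calc C * max ‖f‖ (D * ‖u‖) ^ 1 ≤ C * ((C * D) ^ (k + 1) * ‖f‖) := by
          rw [pow_one]
          gcongr
          refine max_le (le_mul_of_one_le_left (norm_nonneg _) (one_le_pow₀ hCD)) ?_
          calc D * ‖u‖ ≤ D * (C * (C * D) ^ k * ‖f‖ ^ 1) := by gcongr
            _ = (C * D) ^ (k + 1) * ‖f‖ := by ring
      _ = C * (C * D) ^ (k + 1) * ‖f‖ ^ 1 := by ring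

end FunctionSpace

section SpectralGap

variable {Ω 𝓧 B : Type*} [MeasurableSpace Ω] [MeasurableSpace 𝓧] [NormedAddCommGroup B]
  [NormedSpace ℂ B] {P : Measure Ω} [IsProbabilityMeasure P] {X : ℕ → Ω → 𝓧}
  {κ : Kernel 𝓧 𝓧} [IsMarkovKernel κ] {ν : Measure 𝓧} [IsProbabilityMeasure ν]
  {ι : B →ₗ[ℂ] 𝓧 → ℂ} {PB : B →L[ℂ] B} {one : B} {m s : ℝ≥0∞} {K κc θ C D : ℝ} {ℓ : ℕ}
  {f : B} {i : ℕ → ℕ} {q p : ℕ}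

lemma IsMarkovChain.exists_complexCov_prod_eq (hX : ∀ i, Measurable (X i))
    (hM : IsMarkovChain P X κ) (hinv : ν.bind κ = ν) (hinit : Measure.map (X 0) P = ν)
    (hmeas : ∀ b, Measurable (ι b)) (hPB : MarkovOpCompat ι κ PB) (hone : ι one = fun _ => 1)
    (hC : CondC ι ν one PB κc θ) (hf : ∀ x, ‖ι f x‖ ≤ 1) (hi : Monotone i) (hq : 1 ≤ q)
    (hqp : q ≤ p) {v : B} (hv : ι v = ι f * tailOp κ (ι f) (fun j => i (q + j)) (p - q) 1) :
    ∃ r : B, complexCov P (fun ω => ∏ j ∈ Finset.range q, ι f (X (i j) ω))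
        (fun ω => ∏ j ∈ Finset.Icc q p, ι f (X (i j) ω))
      = ∫ ω, (∏ j ∈ Finset.range q, ι f (X (i j) ω)) * ι r (X (i (q - 1)) ω) ∂P ∧
      (∀ x, ‖ι r x‖ ≤ 2) ∧ ‖r‖ ≤ κc * ‖v‖ * θ ^ (i q - i (q - 1)) := by
  have hv1 : ∀ x, ‖ι v x‖ ≤ 1 := hv ▸ norm_mul_tailOp_one_le hf _ _
  have hr : ∀ x, ι ((PB ^ (i q - i (q - 1))) v - (∫ y, ι v y ∂ν) • one) x
      = (markovOp κ)^[i q - i (q - 1)] (ι v) x - ∫ y, ι v y ∂ν := fun x => by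
    rw [map_sub, map_smul, hPB.iterate, hone]
    simp
  refine ⟨_, ?_, fun x => ?_, hC v _⟩
  · rw [hM.complexCov_prod_eq hX hinv hinit (hmeas f) hf hi hq hqp, ← hv]
    simp_rw [hr]
  · rw [hr, ← one_add_one_eq_two]
    refine (norm_sub_le _ _).trans (add_le_add (norm_iterate_markovOp_le hv1 _ x) ?_)
    simpa using norm_integral_le_of_norm_le_const (μ := ν) (ae_of_all _ hv1)

variable [ENNReal.HolderTriple s m 1]

lemma IsMarkovChain.norm_complexCov_prod_le_of_lt_two (hX : ∀ i, Measurable (X i))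
    (hM : IsMarkovChain P X κ) (hinv : ν.bind κ = ν) (hinit : Measure.map (X 0) P = ν)
    (hmeas : ∀ b, Measurable (ι b)) (hPB : MarkovOpCompat ι κ PB) (hone : ι one = fun _ => 1)
    (hK : 0 ≤ K) (hKle : ∀ b : B, eLpNorm (ι b) m ν ≤ ENNReal.ofReal (K * ‖b‖))
    (hC : CondC ι ν one PB κc θ) (hκc : 0 ≤ κc) (hθ : 0 ≤ θ)
    (hPBD : ∀ k b, ‖(PB ^ k) b‖ ≤ D * ‖b‖) (hD : 1 ≤ D)
    (hE : HasProductBound ι C ℓ) (hC1 : 1 ≤ C) (hℓ : ℓ < 2)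
    (hf : ∀ x, ‖ι f x‖ ≤ 1) (hi : Monotone i) (hq : 1 ≤ q) (hqp : q ≤ p) :
    ‖complexCov P (fun ω => ∏ j ∈ Finset.range q, ι f (X (i j) ω))
        (fun ω => ∏ j ∈ Finset.Icc q p, ι f (X (i j) ω))‖
      ≤ K * κc * C * (C * D) ^ p * (eLpNorm (ι f) s ν).toReal * ‖f‖ ^ ℓ
          * θ ^ (i q - i (q - 1)) := by
  obtain ⟨v, hv, hvn⟩ := hE.exists_eq_mul_tailOp_one_norm_le_of_lt_two hℓ hC1 hD hPB hPBD hone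
    hf (p - q) fun j => i (q + j)
  obtain ⟨r, hcov, hr2, hrn⟩ :=
    hM.exists_complexCov_prod_eq hX hinv hinit hmeas hPB hone hC hf hi hq hqp hv
  rw [hcov]
  calc _ ≤ (eLpNorm (ι f) s ν).toReal * (eLpNorm (ι r) m ν).toReal :=
        hM.norm_integral_prod_mul_le hX hinv hinit (hmeas f) hf (hmeas r) hr2 hq
    _ ≤ (eLpNorm (ι f) s ν).toReal *
          (K * (κc * (C * (C * D) ^ (p - q) * ‖f‖ ^ ℓ) * θ ^ (i q - i (q - 1)))) := by
        gcongr
        exact (toReal_eLpNorm_le hK hKle r).trans (by gcongr; exact hrn.trans (by gcongr))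
    _ ≤ (eLpNorm (ι f) s ν).toReal *
          (K * (κc * (C * (C * D) ^ p * ‖f‖ ^ ℓ) * θ ^ (i q - i (q - 1)))) := by
        gcongr
        · exact one_le_mul_of_one_le_of_one_le hC1 hD
        · omega
    _ = _ := by ring

lemma IsMarkovChain.norm_complexCov_prod_le_of_two_le (hX : ∀ i, Measurable (X i))
    (hM : IsMarkovChain P X κ) (hinv : ν.bind κ = ν) (hinit : Measure.map (X 0) P = ν)
    (hmeas : ∀ b, Measurable (ι b)) (hPB : MarkovOpCompat ι κ PB) (hone : ι one = fun _ => 1)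
    (hK : 0 ≤ K) (hKle : ∀ b : B, eLpNorm (ι b) m ν ≤ ENNReal.ofReal (K * ‖b‖))
    (hC : CondC ι ν one PB κc θ) (hκc : 0 ≤ κc) (hθ : 0 ≤ θ)
    (hPBD : ∀ k b, ‖(PB ^ k) b‖ ≤ D * ‖b‖) (hD : 0 ≤ D)
    (hE : HasProductBound ι C ℓ) (hC0 : 0 ≤ C) (hℓ : 2 ≤ ℓ)
    (hf : ∀ x, ‖ι f x‖ ≤ 1) (hi : Monotone i) (hq : 1 ≤ q) (hqp : q ≤ p) :
    ‖complexCov P (fun ω => ∏ j ∈ Finset.range q, ι f (X (i j) ω))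
        (fun ω => ∏ j ∈ Finset.Icc q p, ι f (X (i j) ω))‖
      ≤ K * κc * (C * D) ^ (p - 1) * (eLpNorm (ι f) s ν).toReal
          * ‖f‖ ^ ((ℓ - 1) * (p - 1) + 1) * θ ^ (i q - i (q - 1)) := by
  obtain ⟨v, hv, hvn⟩ := hE.exists_eq_mul_tailOp_one_norm_le_of_two_le hC0 hℓ hD hPB hPBD hf
    (p - q) fun j => i (q + j)
  obtain ⟨r, hcov, hr2, hrn⟩ :=
    hM.exists_complexCov_prod_eq hX hinv hinit hmeas hPB hone hC hf hi hq hqp hv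
  obtain ⟨w, hw, hwn⟩ := hE.exists_eq_tailOp_norm_le_of_two_le hC0 hℓ hD hPB hPBD hf hr2 (q - 1) i
  set A := C * ‖f‖ ^ (ℓ - 1) * D
  have hpow : A ^ (q - 1) * A ^ (p - q) = (C * D) ^ (p - 1) * ‖f‖ ^ ((ℓ - 1) * (p - 1)) := by
    rw [← pow_add, show q - 1 + (p - q) = p - 1 by omega, pow_mul, ← mul_pow]
    ring
  rw [hcov]
  calc _ ≤ (eLpNorm (ι f) s ν).toReal * (eLpNorm (tailOp κ (ι f) i (q - 1) (ι r)) m ν).toReal :=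
        hM.norm_integral_prod_mul_le_tailOp hX hinv hinit (hmeas f) hf (hmeas r) hr2 hi hq
    _ ≤ (eLpNorm (ι f) s ν).toReal *
          (K * (A ^ (q - 1) * (κc * (A ^ (p - q) * ‖f‖) * θ ^ (i q - i (q - 1))))) := by
        rw [← hw]
        gcongr
        refine (toReal_eLpNorm_le hK hKle w).trans (mul_le_mul_of_nonneg_left (hwn.trans ?_) hK)
        gcongr
        exact hrn.trans (by gcongr)
    _ = _ := by
        linear_combination (K * κc * (eLpNorm (ι f) s ν).toReal * ‖f‖
          * θ ^ (i q - i (q - 1))) * hpow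

end SpectralGap

end SECLT

theorem multiple_mixing_from_spectral_gap_general
    {Ω 𝓧 B : Type} [MeasurableSpace Ω] [MeasurableSpace 𝓧]
    [NormedAddCommGroup B] [NormedSpace ℂ B]
    (P : MeasureTheory.Measure Ω) [MeasureTheory.IsProbabilityMeasure P]
    (X : ℕ → Ω → 𝓧) (hXmeas : ∀ i, Measurable (X i))
    (κ : ProbabilityTheory.Kernel 𝓧 𝓧) [ProbabilityTheory.IsMarkovKernel κ]
    (hMarkov : IsMarkovChain P X κ)
    (ν : MeasureTheory.Measure 𝓧) [MeasureTheory.IsProbabilityMeasure ν]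
    (hinv : ν.bind (fun x => κ x) = ν)
    (hinit : MeasureTheory.Measure.map (X 0) P = ν)
    (ι : B →ₗ[ℂ] 𝓧 → ℂ)
    (PB : B →L[ℂ] B) (hPB : MarkovOpCompat ι κ PB)
    (m s : ℝ≥0∞) (hms : 1 / m + 1 / s = 1)
    (hA : CondA ι)
    (one : B) (hone : ι one = fun _ => 1)
    (hB : CondB ι ν m)
    (κc θ : ℝ) (hκc : 0 < κc) (hθ : θ ∈ Set.Ico (0:ℝ) 1)
    (hC : CondC ι ν one PB κc θ)
    (hE : CondE ι) :
    ∀ p : ℕ, 0 < p → ∃ (ℓ : ℕ) (c : ℝ), 0 < c ∧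
      ∀ b : B, (∫ x, ι b x ∂ν) = 0 → (∀ x, ‖ι b x‖ ≤ 1) →
      ∀ i : ℕ → ℕ, Monotone i → ∀ q : ℕ, 1 ≤ q → q ≤ p →
        ‖
          ((∫ ω, (∏ j ∈ Finset.range q, ι b (X (i j) ω))
              * (∏ j ∈ Finset.Icc q p, ι b (X (i j) ω)) ∂P)
            - (∫ ω, ∏ j ∈ Finset.range q, ι b (X (i j) ω) ∂P)
              * (∫ ω, ∏ j ∈ Finset.Icc q p, ι b (X (i j) ω) ∂P))‖
          ≤ c * (MeasureTheory.eLpNorm (ι b) s ν).toReal * ‖b‖ ^ ℓ * θ ^ (i q - i (q - 1)) := by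
  intro p _
  have : ENNReal.HolderConjugate s m :=
    ENNReal.holderConjugate_iff.mpr (by simpa [one_div, add_comm] using hms)
  obtain ⟨K, hK, hKle⟩ := hB
  obtain ⟨C, hC0, ℓ, hE⟩ : ∃ C, 0 < C ∧ ∃ ℓ, HasProductBound ι C ℓ := hE
  have hPBD := hC.norm_pow_apply_le hκc.le hθ
    (norm_integral_le_of_eLpNorm_le (ENNReal.HolderConjugate.one_le m s) hA.1 hK.le hKle)
  rcases lt_or_ge ℓ 2 with hℓ | hℓ
  · refine ⟨ℓ, K * κc * max C 1 * (max C 1 * max (κc + K * ‖one‖) 1) ^ p, by positivity,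
      fun b _ hb i hi q hq hqp => ?_⟩
    exact hMarkov.norm_complexCov_prod_le_of_lt_two hXmeas hinv hinit hA.1 hPB hone hK.le hKle
      hC hκc.le hθ.1 (fun k b => (hPBD k b).trans (by gcongr; exact le_max_left _ _))
      (le_max_right _ _) (hE.mono (le_max_left _ _)) (le_max_right _ _) hℓ hb hi hq hqp
  · refine ⟨(ℓ - 1) * (p - 1) + 1, K * κc * (C * (κc + K * ‖one‖)) ^ (p - 1), by positivity,
      fun b _ hb i hi q hq hqp => ?_⟩
    exact hMarkov.norm_complexCov_prod_le_of_two_le hXmeas hinv hinit hA.1 hPB hone hK.le hKle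
      hC hκc.le hθ.1 hPBD (by positivity) hE hC0.le hℓ hb hi hq hqp

/-- **Multiple mixing from a spectral gap** (Lemma 6.4 of the paper).
Under conditions (A), (B), (C), (E), the chain is multiple mixing with respect to `B` with
`d₀ = 0` and `s = m/(m−1)`: for every `p ≥ 1` there are `ℓ` and `c > 0` such that for all
`f ∈ B` with `νf = 0` and `‖f‖_∞ ≤ 1`, all monotone indices `i₀ ≤ … ≤ i_p`, and all
`q ∈ {1,…,p}`,
`|Cov(f(X_{i₀})⋯f(X_{i_{q−1}}), f(X_{i_q})⋯f(X_{i_p}))| ≤ c ‖f‖_s ‖f‖_B^ℓ θ^{i_q−i_{q−1}}`. -/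
theorem multiple_mixing_from_spectral_gap
    {Ω 𝓧 B : Type} [MeasurableSpace Ω] [MeasurableSpace 𝓧]
    [NormedAddCommGroup B] [NormedSpace ℂ B] [CompleteSpace B]
    (P : MeasureTheory.Measure Ω) [MeasureTheory.IsProbabilityMeasure P]
    (X : ℕ → Ω → 𝓧) (hXmeas : ∀ i, Measurable (X i))
    (κ : ProbabilityTheory.Kernel 𝓧 𝓧) [ProbabilityTheory.IsMarkovKernel κ]
    (hMarkov : IsMarkovChain P X κ)
    (ν : MeasureTheory.Measure 𝓧) [MeasureTheory.IsProbabilityMeasure ν]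
    (hinv : ν.bind (fun x => κ x) = ν)
    (hinit : MeasureTheory.Measure.map (X 0) P = ν)
    (ι : B →ₗ[ℂ] 𝓧 → ℂ)
    (PB : B →L[ℂ] B) (hPB : MarkovOpCompat ι κ PB)
    (m s : ℝ≥0∞) (hm : 1 ≤ m) (hms : 1 / m + 1 / s = 1)
    (hA : CondA ι)
    (one : B) (hone : ι one = fun _ => 1)
    (hB : CondB ι ν m)
    (κc θ : ℝ) (hκc : 0 < κc) (hθ : θ ∈ Set.Ico (0:ℝ) 1)
    (hC : CondC ι ν one PB κc θ)
    (hE : CondE ι) :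
    ∀ p : ℕ, 0 < p → ∃ (ℓ : ℕ) (c : ℝ), 0 < c ∧
      ∀ b : B, (∫ x, ι b x ∂ν) = 0 → (∀ x, ‖ι b x‖ ≤ 1) →
      ∀ i : ℕ → ℕ, Monotone i → ∀ q : ℕ, 1 ≤ q → q ≤ p →
        ‖
          ((∫ ω, (∏ j ∈ Finset.range q, ι b (X (i j) ω))
              * (∏ j ∈ Finset.Icc q p, ι b (X (i j) ω)) ∂P)
            - (∫ ω, ∏ j ∈ Finset.range q, ι b (X (i j) ω) ∂P)
              * (∫ ω, ∏ j ∈ Finset.Icc q p, ι b (X (i j) ω) ∂P))‖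
          ≤ c * (MeasureTheory.eLpNorm (ι b) s ν).toReal * ‖b‖ ^ ℓ * θ ^ (i q - i (q - 1)) :=
  multiple_mixing_from_spectral_gap_general P X hXmeas κ hMarkov ν hinv hinit ι PB hPB m s hms hA
    one hone hB κc θ hκc hθ hC hE
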